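/- Selection does not admit efficient error reduction: for every n ≥ 3, with XOR_n the parity function on {0,1}^n and D the distribution generated by sampling z uniformly from {0,1}^{n−2}, setting a := XOR_{n−2}(z), sampling a uniform bit b, and outputting a a z with probability 1/100 and b b z with probability 99/100, one has sel_{1/2 − 1/200}(XOR_n, D) ≤ 1 while sel_{1/3}(XOR_n, D) ≥ n−2. -/

import Mathlib

open Finset

/-- A deterministic decision tree over alphabet `α`, querying positions `ι`,
with output labels `β`.  A `node i ch` queries position `i` and has one child per symbol. -/
inductive DTree (α ι β : Type) : Type where
  | leaf : β → DTree α ι β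
  | node : ι → (α → DTree α ι β) → DTree α ι β

namespace DTree

/-- The output of the tree on input `x`. -/
def eval {α ι β : Type} : DTree α ι β → (ι → α) → β
  | .leaf b, _ => b
  | .node i ch, x => (ch (x i)).eval x

/-- The depth of a tree: the maximum number of queries along any root-to-leaf path. -/
def depth {α ι β : Type} [Fintype α] : DTree α ι β → ℕ
  | .leaf _ => 0
  | .node _ ch => 1 + Finset.univ.sup fun a => (ch a).depth

/-- `Input(ℓ)` for the leaf `ℓ` reached by `x`: the set of inputs that follow
the same root-to-leaf path as `x`. -/
def reach {α ι β : Type} : DTree α ι β → (ι → α) → Set (ι → α)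
  | .leaf _, _ => Set.univ
  | .node i ch, x => {y | y i = x i} ∩ (ch (x i)).reach x

/-- For a tree on `k` samples, the set `ℓ_j ⊆ Σ^n` of strings consistent with the
queries made to the `j`-th sample on the path followed by input `x`. -/
def reachJ {α β : Type} {k n : ℕ} :
    DTree α (Fin k × Fin n) β → ((Fin k × Fin n) → α) → Fin k → Set (Fin n → α)
  | .leaf _, _, _ => Set.univ
  | .node p ch, x, j =>
      (if p.1 = j then {y : Fin n → α | y p.2 = x p} else Set.univ) ∩ (ch (x p)).reachJ x j

end DTree

/-- Probability mass of a set `S` under (the mass function of) a distribution `D`. -/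
noncomputable def prS {γ : Type} [Fintype γ] (D : γ → ℝ) (S : Set γ) : ℝ :=
  ∑ x, S.indicator D x

/-- `D` is a probability mass function on the finite type `γ`. -/
def IsDist {γ : Type} [Fintype γ] (D : γ → ℝ) : Prop :=
  (∀ x, 0 ≤ D x) ∧ ∑ x, D x = 1

/-- Likelihood ratio `LR(S) = D1(S)/D0(S)`. -/
noncomputable def LR {γ : Type} [Fintype γ] (D0 D1 : γ → ℝ) (S : Set γ) : ℝ :=
  prS D1 S / prS D0 S

/-- The `k`-fold product distribution `D^k` on `k` samples (input flattened). -/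
noncomputable def prodD {α : Type} {n k : ℕ} (D : (Fin n → α) → ℝ) :
    ((Fin k × Fin n) → α) → ℝ :=
  fun x => ∏ j, D fun i => x (j, i)

/-- `T` is a `(δ, M)`-likelihood booster for `D0, D1`. -/
def LBooster {α β : Type} [Fintype α] {n : ℕ}
    (D0 D1 : (Fin n → α) → ℝ) (δ M : ℝ) (T : DTree α (Fin n) β) : Prop :=
  1 - δ ≤ prS D1 {x | M ≤ LR D0 D1 (T.reach x)}

/-- `T` is a `(δ, M)`-overall likelihood booster for `D0^k, D1^k`. -/
def OBooster {α β : Type} [Fintype α] {n k : ℕ}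
    (D0 D1 : (Fin n → α) → ℝ) (δ M : ℝ) (T : DTree α (Fin k × Fin n) β) : Prop :=
  1 - δ ≤ prS (prodD D1) {x | M ≤ ∏ j, LR D0 D1 (T.reachJ x j)}

open scoped Classical in
/-- `T` is a `(δ, ε, M)`-uniform likelihood booster for `D0^k, D1^k`. -/
def UBooster {α β : Type} [Fintype α] {n k : ℕ}
    (D0 D1 : (Fin n → α) → ℝ) (δ ε M : ℝ) (T : DTree α (Fin k × Fin n) β) : Prop :=
  1 - δ ≤ prS (prodD D1)
    {x | (1 - ε) * k ≤ ((Finset.univ.filter fun j => M ≤ LR D0 D1 (T.reachJ x j)).card : ℝ)}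

/-- `D = ½D0 + ½D1` is a balanced input distribution for the partial function `f`:
`D_b` is a distribution supported on `f⁻¹(b)`. -/
def BalancedDist {n : ℕ} (f : (Fin n → Bool) → Option Bool) (D0 D1 : (Fin n → Bool) → ℝ) : Prop :=
  IsDist D0 ∧ IsDist D1 ∧ (∀ x, D0 x ≠ 0 → f x = some false) ∧ ∀ x, D1 x ≠ 0 → f x = some true

/-- `corr_ε(f, D)`: the minimum over `k ≥ 1` of the least depth of a deterministic decision
tree on `k` samples which, for a uniformly random `b`, on input drawn from `D_b^k`
outputs `b` with probability at least `1 - ε`. -/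
noncomputable def corrC {n : ℕ} (ε : ℝ) (D0 D1 : (Fin n → Bool) → ℝ) : ℕ :=
  sInf {q | ∃ k, 0 < k ∧ ∃ T : DTree Bool (Fin k × Fin n) Bool, T.depth ≤ q ∧
    1 - ε ≤ (prS (prodD D0) {x | T.eval x = false} + prS (prodD D1) {x | T.eval x = true}) / 2}

/-- `sel_ε(f, D)`: the minimum over `k ≥ 1` of the least depth of a deterministic decision
tree on `k` samples from `D` outputting a pair `(i, f(xⁱ))` with probability at least `1 - ε`. -/
noncomputable def selC {n : ℕ} (ε : ℝ) (f : (Fin n → Bool) → Option Bool)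
    (D : (Fin n → Bool) → ℝ) : ℕ :=
  sInf {q | ∃ k, 0 < k ∧ ∃ T : DTree Bool (Fin k × Fin n) (Fin k × Bool), T.depth ≤ q ∧
    1 - ε ≤ prS (prodD D) {x | f (fun i => x ((T.eval x).1, i)) = some (T.eval x).2}}

/-- The product distribution `D_{ab}^k = (Da × Db)^k` on `k` pairs of samples. -/
noncomputable def prodD2 {n k : ℕ} (Da Db : (Fin n → Bool) → ℝ) :
    ((Fin k × Fin 2 × Fin n) → Bool) → ℝ :=
  fun x => ∏ j, (Da fun i => x (j, 0, i)) * Db fun i => x (j, 1, i)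

/-- `bicorr_ε(f, D)`: minimum over `k ≥ 1` of the least depth of a deterministic decision tree
that distinguishes `D_{01}^k` (output `false`) from `D_{10}^k` (output `true`) with
probability at least `1 - ε` for a uniformly random choice between the two. -/
noncomputable def bicorrC {n : ℕ} (ε : ℝ) (D0 D1 : (Fin n → Bool) → ℝ) : ℕ :=
  sInf {q | ∃ k, 0 < k ∧ ∃ T : DTree Bool (Fin k × Fin 2 × Fin n) Bool, T.depth ≤ q ∧
    1 - ε ≤ (prS (prodD2 D0 D1) {x | T.eval x = false} +
             prS (prodD2 D1 D0) {x | T.eval x = true}) / 2}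

/-- `R_ε(f)`: randomized query complexity, i.e. the least `q` such that some probability
distribution over deterministic decision trees of depth at most `q` outputs `f x`
with probability at least `1 - ε` for every `x` in the domain of `f`. -/
noncomputable def Rq {ι : Type} (ε : ℝ) (f : (ι → Bool) → Option Bool) : ℕ :=
  sInf {q | ∃ (p : ℕ → ℝ) (Ts : ℕ → DTree Bool ι Bool),
    (∀ i, 0 ≤ p i) ∧ (∑' i, p i) = 1 ∧ (∀ i, (Ts i).depth ≤ q) ∧
    ∀ x b, f x = some b → 1 - ε ≤ ∑' i, if (Ts i).eval x = b then p i else 0}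

/-- `corr_ε(f)`: the maximum of `corr_ε(f, D)` over balanced input distributions `D` for `f`. -/
noncomputable def corrMax {n : ℕ} (ε : ℝ) (f : (Fin n → Bool) → Option Bool) : ℕ :=
  sSup {q | ∃ D0 D1, BalancedDist f D0 D1 ∧ q = corrC ε D0 D1}

/-- `sel_ε(f)`: the maximum of `sel_ε(f, D)` over balanced input distributions `D` for `f`. -/
noncomputable def selMax {n : ℕ} (ε : ℝ) (f : (Fin n → Bool) → Option Bool) : ℕ :=
  sSup {q | ∃ D0 D1, BalancedDist f D0 D1 ∧ q = selC ε f fun x => (D0 x + D1 x) / 2}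
/-- The parity (XOR) of all bits of `x`. -/
def XORn {n : ℕ} (x : Fin n → Bool) : Bool :=
  decide ((Finset.univ.filter fun i => x i = true).card % 2 = 1)

/-- The parity of the bits of `x` in positions `≥ 2`. -/
def XORtail {n : ℕ} (x : Fin n → Bool) : Bool :=
  decide ((Finset.univ.filter fun i : Fin n => 2 ≤ (i : ℕ) ∧ x i = true).card % 2 = 1)

/-- `x` with the bits in block `B` flipped. -/
def flipB {n : ℕ} (x : Fin n → Bool) (B : Finset (Fin n)) : Fin n → Bool :=
  fun i => if i ∈ B then !(x i) else x i

/-- `B` is a sensitive block of `f` on `x`: `x^B` lies in the domain of `f` and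
`f(x^B) ≠ f(x)`. -/
def SensBlock {n : ℕ} (f : (Fin n → Bool) → Option Bool) (x : Fin n → Bool)
    (B : Finset (Fin n)) : Prop :=
  (f (flipB x B)).isSome ∧ f (flipB x B) ≠ f x

/-- Fractional block sensitivity `fbs(f) = max_x fbs(f, x)`, where `fbs(f,x)` is the value
of the fractional packing LP over the sensitive blocks of `x`. -/
noncomputable def fbs {n : ℕ} (f : (Fin n → Bool) → Option Bool) : ℝ :=
  sSup {r | ∃ x, (f x).isSome ∧ ∃ w : Finset (Fin n) → ℝ,
    (∀ B, 0 ≤ w B) ∧ (∀ B, w B ≤ 1) ∧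
    (∀ B, w B ≠ 0 → SensBlock f x B) ∧
    (∀ i, ∑ B ∈ Finset.univ.filter (fun B => i ∈ B), w B ≤ 1) ∧
    r = ∑ B, w B}

/-- The composed partial function `f ∘ g`, defined on `(x¹, …, xⁿ)` when every `xⁱ` is in
the domain of `g`, with value `f(g(x¹), …, g(xⁿ))`. -/
def compFG {n m : ℕ} (f : (Fin n → Bool) → Option Bool) (g : (Fin m → Bool) → Option Bool) :
    ((Fin n × Fin m) → Bool) → Option Bool :=
  fun x =>
    if h : ∀ i, (g fun s => x (i, s)).isSome then
      f fun i => (g fun s => x (i, s)).get (h i)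
    else none

/-- Number of queries that `T` makes into block `B` on input `x` (each query reads one bit
`(i, s)`, and counts if `i ∈ B`). -/
def countQ {m n : ℕ} {β : Type} (B : Finset (Fin n)) :
    DTree Bool (Fin n × Fin m) β → ((Fin n × Fin m) → Bool) → ℕ
  | .leaf _, _ => 0
  | .node p ch, x => (if p.1 ∈ B then 1 else 0) + countQ B (ch (x p)) x

/-- The Shaltiel distribution for `XOR_n`, `n = m + 2`: with probability 99/100 output `0`
followed by `n-1` uniform bits; with probability 1/100 output `1`, one uniform bit, `0^{n-2}`. -/
noncomputable def D16 (m : ℕ) : (Fin (m + 2) → Bool) → ℝ := fun x =>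
  (if x 0 = false then (99 / 100) * ((1:ℝ) / 2) ^ (m + 1) else 0) +
  (if x 0 = true ∧ (∀ i : Fin (m + 2), 2 ≤ (i : ℕ) → x i = false) then 1 / 200 else 0)

/-- The distribution of Theorem 2 for `XOR_n`, `n = m + 3`: sample `z` uniform on `n-2` bits,
`a := XOR(z)`, `b` uniform; output `a a z` w.p. 1/100 and `b b z` w.p. 99/100. -/
noncomputable def D34 (m : ℕ) : (Fin (m + 3) → Bool) → ℝ := fun x =>
  if x 0 = x 1 then
    ((1:ℝ) / 2) ^ (m + 1) * (99 / 200 + if x 0 = XORtail x then 1 / 100 else 0)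
  else 0

/-- A distribution conditioned on `XORn x = b` (for distributions giving each value
probability 1/2). -/
noncomputable def condXOR {n : ℕ} (D : (Fin n → Bool) → ℝ) (b : Bool) : (Fin n → Bool) → ℝ :=
  fun x => if XORn x = b then 2 * D x else 0

/-!
Answering the first bit of a single sample is right on every sample of the form `a a z` and on
half of those of the form `b b z`, i.e. with probability `1/100 + 99/200 = 101/200`.

Conversely, a tree of depth at most `n - 3` leaves some bit of the tail `z` of the sample it
selects unqueried. Flipping that bit changes the parity of the sample but not the tree's run, so
it maps correct inputs injectively to incorrect ones; it only toggles whether the selected sample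
has the form `a a z`, so it changes the mass of the input by a factor of at least `99/101`.
Hence every such tree succeeds with probability at most `101/200 < 2/3`.
-/

namespace DTree

variable {α ι β : Type}

def queried [DecidableEq ι] : DTree α ι β → (ι → α) → Finset ι
  | .leaf _, _ => ∅
  | .node i ch, x => insert i ((ch (x i)).queried x)

theorem card_queried_le_depth [Fintype α] [DecidableEq ι] (T : DTree α ι β) (x : ι → α) :
    (T.queried x).card ≤ T.depth := by
  induction T with
  | leaf => simp [queried, depth]
  | node i ch ih =>
    have hsup : (ch (x i)).depth ≤ univ.sup fun a => (ch a).depth :=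
      le_sup (f := fun a => (ch a).depth) (mem_univ (x i))
    have := card_insert_le i ((ch (x i)).queried x)
    have := ih (x i)
    simp only [queried, depth]
    omega

theorem eval_eq_and_queried_eq [DecidableEq ι] (T : DTree α ι β) {x y : ι → α}
    (h : ∀ i ∈ T.queried x, y i = x i) : T.eval y = T.eval x ∧ T.queried y = T.queried x := by
  induction T with
  | leaf => exact ⟨rfl, rfl⟩
  | node i ch ih =>
    have hi : y i = x i := h i (mem_insert_self _ _)
    obtain ⟨heval, hqueried⟩ := ih (x i) fun j hj => h j (mem_insert_of_mem hj)
    simp only [eval, queried, hi, heval, hqueried, and_self]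

theorem exists_eval_eq_of_list [Fintype α] [DecidableEq ι] (g : (ι → α) → β) :
    ∀ (l : List ι) (y : ι → α), ∃ T : DTree α ι β, T.depth ≤ l.length ∧
      ∀ x, (∀ i ∉ l, x i = y i) → T.eval x = g x
  | [], y => ⟨.leaf (g y), by simp [depth], fun x hx => by
      simp [eval, funext fun i => (hx i List.not_mem_nil).symm]⟩
  | i :: l, y => by
    choose ch hdepth heval using fun a => exists_eval_eq_of_list g l (Function.update y i a)
    refine ⟨.node i ch, ?_, fun x hx => heval (x i) x fun j hj => ?_⟩
    · have := Finset.sup_le (s := univ) fun a _ => hdepth a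
      simp only [depth, List.length_cons]
      omega
    · by_cases hji : j = i
      · simp [hji]
      · simp [hji, hx j (by simp [hj, hji])]

theorem exists_depth_le_card_eval_eq [Fintype α] [Inhabited α] [Fintype ι] [DecidableEq ι]
    (g : (ι → α) → β) : ∃ T : DTree α ι β, T.depth ≤ Fintype.card ι ∧ ∀ x, T.eval x = g x := by
  obtain ⟨T, hdepth, heval⟩ := exists_eval_eq_of_list g univ.toList default
  exact ⟨T, by simpa using hdepth, fun x => heval x fun i hi => absurd (by simp) hi⟩

end DTree

section Probability

variable {γ : Type} [Fintype γ]

theorem prS_add_prS_compl (D : γ → ℝ) (S : Set γ) : prS D S + prS D Sᶜ = ∑ x, D x := by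
  simp only [prS, ← sum_add_distrib, Set.indicator_self_add_compl_apply]

theorem prS_univ (D : γ → ℝ) : prS D Set.univ = ∑ x, D x := by
  simp [prS]

theorem prS_eq_sum_filter (D : γ → ℝ) (S : Set γ) [DecidablePred (· ∈ S)] :
    prS D S = ∑ x with x ∈ S, D x := by
  simp only [prS, Set.indicator_apply, sum_filter]

theorem mul_prS_le_prS_compl {D : γ → ℝ} (hD : ∀ x, 0 ≤ D x) {S : Set γ} {Φ : γ → γ}
    (hmaps : Set.MapsTo Φ S Sᶜ) (hinj : Set.InjOn Φ S) {c : ℝ}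
    (hc : ∀ x ∈ S, c * D x ≤ D (Φ x)) : c * prS D S ≤ prS D Sᶜ := by
  classical
  rw [prS_eq_sum_filter, prS_eq_sum_filter]
  calc c * ∑ x with x ∈ S, D x = ∑ x with x ∈ S, c * D x := mul_sum _ _ _
    _ ≤ ∑ x with x ∈ S, D (Φ x) := sum_le_sum fun x hx => hc x (mem_filter.mp hx).2
    _ = ∑ y ∈ (univ.filter (· ∈ S)).image Φ, D y :=
      (sum_image fun x hx y hy => hinj (mem_filter.mp hx).2 (mem_filter.mp hy).2).symm
    _ ≤ ∑ y with y ∈ Sᶜ, D y := by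
      refine sum_le_sum_of_subset_of_nonneg (fun y hy => ?_) fun y _ _ => hD y
      obtain ⟨x, hx, rfl⟩ := mem_image.mp hy
      exact mem_filter.mpr ⟨mem_univ _, hmaps (mem_filter.mp hx).2⟩

end Probability

section ProductDistribution

variable {α : Type} {n k : ℕ}

theorem prodD_nonneg {D : (Fin n → α) → ℝ} (hD : ∀ y, 0 ≤ D y) (x : Fin k × Fin n → α) :
    0 ≤ prodD D x :=
  prod_nonneg fun _ _ => hD _

theorem sum_prodD [Fintype α] {D : (Fin n → α) → ℝ} (hD : ∑ y, D y = 1) :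
    ∑ x : Fin k × Fin n → α, prodD D x = 1 := by
  rw [← (Equiv.curry (Fin k) (Fin n) α).symm.sum_comp]
  exact (Fintype.prod_sum fun (_ : Fin k) y => D y).symm.trans (by simp [hD])

theorem mul_prod_le_prod_update {ι : Type} [Fintype ι] [DecidableEq ι] {g : ι → ℝ}
    (hg : ∀ i, 0 ≤ g i) (i : ι) {c v : ℝ} (h : c * g i ≤ v) :
    c * ∏ j, g j ≤ ∏ j, Function.update g i v j := by
  rw [prod_update_of_mem (mem_univ i), prod_eq_mul_prod_sdiff_singleton_of_mem (mem_univ i) g,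
    ← mul_assoc]
  exact mul_le_mul_of_nonneg_right h (prod_nonneg fun j _ => hg j)

theorem prS_prodD_fin_one [Fintype α] (D : (Fin n → α) → ℝ) (S : Set (Fin 1 × Fin n → α)) :
    prS (prodD D) S = prS D {y | (fun p : Fin 1 × Fin n => y p.2) ∈ S} := by
  rw [prS, ← ((Equiv.uniqueProd (Fin n) (Fin 1)).arrowCongr (Equiv.refl α)).symm.sum_comp]
  refine sum_congr rfl fun y _ => ?_
  show S.indicator (prodD D) (fun p => y p.2) = _
  by_cases h : (fun p : Fin 1 × Fin n => y p.2) ∈ S <;> simp [h, prodD]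

end ProductDistribution

def selSuccess {n k : ℕ} (f : (Fin n → Bool) → Option Bool)
    (T : DTree Bool (Fin k × Fin n) (Fin k × Bool)) : Set (Fin k × Fin n → Bool) :=
  {x | f (fun i => x ((T.eval x).1, i)) = some (T.eval x).2}

namespace DTree

variable {n k : ℕ} {β : Type} (T : DTree Bool (Fin k × Fin n) (Fin k × β)) {P : Finset (Fin n)}

def unqueriedIn (P : Finset (Fin n)) (x : Fin k × Fin n → Bool) : Finset (Fin n) :=
  {s ∈ P | ((T.eval x).1, s) ∉ T.queried x}

theorem unqueriedIn_nonempty (hP : T.depth < P.card) (x : Fin k × Fin n → Bool) :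
    (T.unqueriedIn P x).Nonempty := by
  by_contra hempty
  have hsub : P.image (Prod.mk (T.eval x).1) ⊆ T.queried x := by
    intro p hp
    obtain ⟨s, hs, rfl⟩ := mem_image.mp hp
    by_contra hq
    exact hempty ⟨s, mem_filter.mpr ⟨hs, hq⟩⟩
  have := card_le_card hsub
  rw [card_image_of_injective _ (Prod.mk_right_injective _)] at this
  have := T.card_queried_le_depth x
  omega

def flipPos (hP : T.depth < P.card) (x : Fin k × Fin n → Bool) : Fin n :=
  (T.unqueriedIn P x).min' (T.unqueriedIn_nonempty hP x)

def flipUnqueried (hP : T.depth < P.card) (x : Fin k × Fin n → Bool) :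
    Fin k × Fin n → Bool :=
  Function.update x ((T.eval x).1, T.flipPos hP x) (!x ((T.eval x).1, T.flipPos hP x))

variable (hP : T.depth < P.card) (x : Fin k × Fin n → Bool)

theorem flipPos_mem_unqueriedIn : T.flipPos hP x ∈ T.unqueriedIn P x :=
  min'_mem _ _

theorem flipPos_mem : T.flipPos hP x ∈ P :=
  (mem_filter.mp (T.flipPos_mem_unqueriedIn hP x)).1

theorem eval_flipUnqueried_and_queried :
    T.eval (T.flipUnqueried hP x) = T.eval x ∧
      T.queried (T.flipUnqueried hP x) = T.queried x :=
  T.eval_eq_and_queried_eq fun p hp => Function.update_of_ne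
    (fun h => (mem_filter.mp (T.flipPos_mem_unqueriedIn hP x)).2 (by rwa [h] at hp)) _ _

theorem eval_flipUnqueried : T.eval (T.flipUnqueried hP x) = T.eval x :=
  (T.eval_flipUnqueried_and_queried hP x).1

theorem flipPos_flipUnqueried : T.flipPos hP (T.flipUnqueried hP x) = T.flipPos hP x := by
  have hsame : T.unqueriedIn P (T.flipUnqueried hP x) = T.unqueriedIn P x := by
    simp only [unqueriedIn, T.eval_flipUnqueried_and_queried hP x]
  simp only [flipPos, hsame]

theorem flipUnqueried_involutive : Function.Involutive (T.flipUnqueried hP) := fun x => by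
  conv_lhs => rw [flipUnqueried, T.eval_flipUnqueried, T.flipPos_flipUnqueried]
  simp [flipUnqueried]

theorem curry_flipUnqueried :
    Function.curry (T.flipUnqueried hP x) =
      Function.update (Function.curry x) (T.eval x).1
        (Function.update (Function.curry x (T.eval x).1) (T.flipPos hP x)
          (!Function.curry x (T.eval x).1 (T.flipPos hP x))) :=
  Function.curry_update _ _ _

end DTree

theorem mul_prS_selSuccess_le_compl {n k : ℕ} {f : (Fin n → Bool) → Option Bool}
    {D : (Fin n → Bool) → ℝ} (hD : ∀ y, 0 ≤ D y) {P : Finset (Fin n)} {c : ℝ}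
    (hf : ∀ y, ∀ s ∈ P, f (Function.update y s (!y s)) ≠ f y)
    (hc : ∀ y, ∀ s ∈ P, c * D y ≤ D (Function.update y s (!y s)))
    (T : DTree Bool (Fin k × Fin n) (Fin k × Bool)) (hP : T.depth < P.card) :
    c * prS (prodD D) (selSuccess f T) ≤ prS (prodD D) (selSuccess f T)ᶜ := by
  refine mul_prS_le_prS_compl (prodD_nonneg hD) (fun x hx hflip => ?_)
    (T.flipUnqueried_involutive hP).injective.injOn fun x _ => ?_
  · have hsample := congrFun (T.curry_flipUnqueried hP x) (T.eval x).1
    rw [Function.update_self] at hsample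
    refine hf (Function.curry x (T.eval x).1) _ (T.flipPos_mem hP x) ?_
    change f (Function.curry (T.flipUnqueried hP x) (T.eval (T.flipUnqueried hP x)).1) =
      some (T.eval (T.flipUnqueried hP x)).2 at hflip
    rw [T.eval_flipUnqueried, hsample] at hflip
    exact hflip.trans hx.symm
  · change c * ∏ j, D (Function.curry x j) ≤ ∏ j, D (Function.curry (T.flipUnqueried hP x) j)
    simp only [T.curry_flipUnqueried hP x, Function.apply_update (fun _ => D)]
    exact mul_prod_le_prod_update (fun j => hD _) _ (hc _ _ (T.flipPos_mem hP x))

theorem le_selC {n : ℕ} {ε : ℝ} {f : (Fin n → Bool) → Option Bool} {D : (Fin n → Bool) → ℝ}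
    {q : ℕ} (hsucc : ∃ k, 0 < k ∧ ∃ T : DTree Bool (Fin k × Fin n) (Fin k × Bool),
      1 - ε ≤ prS (prodD D) (selSuccess f T))
    (hfail : ∀ k (T : DTree Bool (Fin k × Fin n) (Fin k × Bool)),
      T.depth ≤ q → prS (prodD D) (selSuccess f T) < 1 - ε) :
    q + 1 ≤ selC ε f D := by
  obtain ⟨k, hk, T, hT⟩ := hsucc
  refine le_csInf ⟨T.depth, k, hk, T, le_rfl, hT⟩ fun q' ⟨k', _, T', hdepth, hT'⟩ => ?_
  by_contra! hq
  exact (hfail k' T' (by omega)).not_ge hT'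

theorem exists_prS_selSuccess_eq_one {n : ℕ} {D : (Fin n → Bool) → ℝ} (hD : ∑ y, D y = 1)
    (g : (Fin n → Bool) → Bool) :
    ∃ T : DTree Bool (Fin 1 × Fin n) (Fin 1 × Bool),
      prS (prodD D) (selSuccess (fun y => some (g y)) T) = 1 := by
  obtain ⟨T, -, hT⟩ := DTree.exists_depth_le_card_eval_eq
    fun x : Fin 1 × Fin n → Bool => ((0 : Fin 1), g fun i => x (0, i))
  have huniv : selSuccess (fun y => some (g y)) T = Set.univ := by
    ext x
    simp [selSuccess, hT]
  exact ⟨T, by rw [huniv, prS_univ, sum_prodD hD]⟩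

theorem Fintype.sum_fun_fin_succ {α M : Type} [Fintype α] [AddCommMonoid M] {n : ℕ}
    (F : (Fin (n + 1) → α) → M) : ∑ x, F x = ∑ a, ∑ z, F (Fin.cons a z) := by
  rw [← (Fin.consEquiv fun _ => α).sum_comp, Fintype.sum_prod_type]
  rfl

theorem Fintype.sum_fun_fin_add_two {α M : Type} [Fintype α] [AddCommMonoid M] {n : ℕ}
    (F : (Fin (n + 2) → α) → M) :
    ∑ x, F x = ∑ z, ∑ b, ∑ a, F (Fin.cons a (Fin.cons b z)) := by
  calc ∑ x, F x = ∑ y, ∑ a, F (Fin.cons a y) := by rw [Fintype.sum_fun_fin_succ, sum_comm]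
    _ = ∑ b, ∑ z, ∑ a, F (Fin.cons a (Fin.cons b z)) := Fintype.sum_fun_fin_succ _
    _ = _ := sum_comm

theorem XORn_update_not {n : ℕ} (y : Fin n → Bool) (s : Fin n) :
    XORn (Function.update y s (!y s)) = !XORn y := by
  have hcount (v : Bool) : #{i | Function.update y s v i = true} =
      (if v = true then 1 else 0) + ∑ i ∈ univ \ {s}, if y i = true then 1 else 0 := by
    rw [card_filter, ← sum_update_of_mem (mem_univ s)]
    exact sum_congr rfl fun i _ =>
      Function.apply_update (fun _ b => if b = true then 1 else 0) y s v i
  have hy := hcount (y s)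
  rw [Function.update_eq_self] at hy
  rw [XORn, XORn, hy, hcount]
  generalize ∑ i ∈ univ \ {s}, (if y i = true then 1 else 0) = C
  rcases Nat.mod_two_eq_zero_or_one C with h | h <;> cases y s <;> simp [h, Nat.add_mod]

theorem XORn_cons {n : ℕ} (a : Bool) (z : Fin n → Bool) :
    XORn (Fin.cons a z : Fin (n + 1) → Bool) = xor a (XORn z) := by
  rw [XORn, XORn, Fin.card_filter_univ_succ']
  simp only [Fin.cons_zero, Fin.cons_succ]
  generalize #{i | z i = true} = C
  rcases Nat.mod_two_eq_zero_or_one C with h | h <;> cases a <;> simp [h, Nat.add_mod]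

theorem XORtail_cons_cons {n : ℕ} (a b : Bool) (z : Fin n → Bool) :
    XORtail (Fin.cons a (Fin.cons b z) : Fin (n + 2) → Bool) = XORn z := by
  rw [XORtail, XORn, Fin.card_filter_univ_succ', Fin.card_filter_univ_succ']
  simp [Fin.val_succ]

section D34

variable (m : ℕ)

theorem D34_cons_cons (a b : Bool) (z : Fin (m + 1) → Bool) :
    D34 m (Fin.cons a (Fin.cons b z)) =
      if a = b then (1 / 2 : ℝ) ^ (m + 1) * (99 / 200 + if a = XORn z then 1 / 100 else 0)
      else 0 := by
  simp [D34, XORtail_cons_cons, Fin.cons_one]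

theorem D34_nonneg (x : Fin (m + 3) → Bool) : 0 ≤ D34 m x := by
  unfold D34
  split_ifs <;> positivity

theorem sum_D34 : ∑ x, D34 m x = 1 := by
  have hz (z : Fin (m + 1) → Bool) :
      ∑ b, ∑ a, D34 m (Fin.cons a (Fin.cons b z)) = ((2 : ℝ) ^ (m + 1))⁻¹ := by
    cases h : XORn z <;> simp [D34_cons_cons, h] <;> ring
  rw [Fintype.sum_fun_fin_add_two, Fintype.sum_congr _ _ hz]
  simp

theorem prS_D34_XORn_eq_apply_zero : prS (D34 m) {x | XORn x = x 0} = 101 / 200 := by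
  have hz (z : Fin (m + 1) → Bool) :
      ∑ b, ∑ a, {x | XORn x = x 0}.indicator (D34 m) (Fin.cons a (Fin.cons b z)) =
        ((2 : ℝ) ^ (m + 1))⁻¹ * (101 / 200) := by
    cases h : XORn z <;> simp [Set.indicator_apply, XORn_cons, D34_cons_cons, h] <;> ring
  rw [prS, Fintype.sum_fun_fin_add_two, Fintype.sum_congr _ _ hz]
  simp

theorem D34_le_D34_update {s : Fin (m + 3)} (hs0 : s ≠ 0) (hs1 : s ≠ 1)
    (x : Fin (m + 3) → Bool) :
    99 / 101 * D34 m x ≤ D34 m (Function.update x s (!x s)) := by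
  unfold D34
  simp only [Function.update_of_ne hs0.symm, Function.update_of_ne hs1.symm]
  split_ifs <;> nlinarith [pow_pos (by norm_num : (0 : ℝ) < 1 / 2) (m + 1)]

end D34

theorem prS_selSuccess_XORn_D34_le {m k : ℕ}
    (T : DTree Bool (Fin k × Fin (m + 3)) (Fin k × Bool)) (hT : T.depth ≤ m) :
    prS (prodD (D34 m)) (selSuccess (fun x => some (XORn x)) T) ≤ 101 / 200 := by
  have hcard : (({0, 1} : Finset (Fin (m + 3)))ᶜ).card = m + 1 := by
    rw [card_compl, card_pair (by simp), Fintype.card_fin]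
    omega
  have hpair := mul_prS_selSuccess_le_compl (f := fun x => some (XORn x)) (P := {0, 1}ᶜ)
    (c := 99 / 101) (D34_nonneg m) (fun y s _ => by simp [XORn_update_not])
    (fun y s hs => D34_le_D34_update m (by simp_all) (by simp_all) y) T (by omega)
  have htotal := prS_add_prS_compl (prodD (D34 m)) (selSuccess (fun x => some (XORn x)) T)
  rw [sum_prodD (sum_D34 m)] at htotal
  linarith

theorem selC_XORn_D34_le_one (m : ℕ) :
    selC (1 / 2 - 1 / 200) (fun x => some (XORn x)) (D34 m) ≤ 1 := by
  let T : DTree Bool (Fin 1 × Fin (m + 3)) (Fin 1 × Bool) := .node (0, 0) fun a => .leaf (0, a)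
  have hdepth : T.depth ≤ 1 := by simp [T, DTree.depth]
  refine Nat.sInf_le ⟨1, one_pos, T, hdepth, ?_⟩
  change _ ≤ prS (prodD (D34 m)) (selSuccess (fun x => some (XORn x)) T)
  rw [prS_prodD_fin_one]
  change _ ≤ prS (D34 m) {y | some (XORn y) = some (y 0)}
  simp only [Option.some.injEq]
  rw [prS_D34_XORn_eq_apply_zero]
  norm_num

/-- Selection does not admit efficient error reduction: for the
distribution `D34 m` on `n = m + 3 ≥ 3` bits, `sel_{1/2 − 1/200}(XOR_n, D) ≤ 1` while
`sel_{1/3}(XOR_n, D) ≥ n − 2`. -/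
theorem sel_no_error_reduction :
    ∀ m : ℕ,
      selC (1/2 - 1/200) (fun x => some (XORn x)) (D34 m) ≤ 1 ∧
      m + 1 ≤ selC (1/3) (fun x => some (XORn x)) (D34 m) := by
  intro m
  refine ⟨selC_XORn_D34_le_one m, ?_⟩
  obtain ⟨T, hT⟩ := exists_prS_selSuccess_eq_one (sum_D34 m) XORn
  refine le_selC ⟨1, one_pos, T, by rw [hT]; norm_num⟩ fun k T' hT' => ?_
  linarith [prS_selSuccess_XORn_D34_le T' hT']
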